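/- Let N₁, N₂ be diagrams in ℕ^n and let α be greater than or equal to the largest vertex of both N₁ and N₂ (in the graded order). Then N₁ ≥ N₂ if and only if N₁(α) ≥ N₂(α), where N(α) = ℕ^n + {β ∈ N : β ≤ α}. -/

import Mathlib

/-- The key `(|α|, α₁, …, α_n)` of a multi-index, compared lexicographically. -/
def dlKey {n : ℕ} (a : Fin n →₀ ℕ) : ℕ ×ₗ Lex (Fin n →₀ ℕ) :=
  toLex ((∑ i, a i : ℕ), toLex a)

/-- Total-degree-then-lexicographic strict comparison `α < β` on multi-indices. -/
def degLexLt {n : ℕ} (a b : Fin n →₀ ℕ) : Prop := dlKey a < dlKey b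

/-- Total-degree-then-lexicographic comparison `α ≤ β` on multi-indices. -/
def degLexLe {n : ℕ} (a b : Fin n →₀ ℕ) : Prop := dlKey a ≤ dlKey b

/-- The translated cone `a + ℕ^n`. -/
def cone {n : ℕ} (a : Fin n →₀ ℕ) : Set (Fin n →₀ ℕ) :=
  {x | ∃ c : Fin n →₀ ℕ, x = a + c}

/-- `N(α) = ℕ^n + {β ∈ N : β ≤ α}`. -/
def diagAt {n : ℕ} (N : Set (Fin n →₀ ℕ)) (α : Fin n →₀ ℕ) : Set (Fin n →₀ ℕ) :=
  {x | ∃ b ∈ N, degLexLe b α ∧ ∃ c : Fin n →₀ ℕ, x = b + c}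

/-- `N^-(α) = ℕ^n + {β ∈ N : β < α}`. -/
def diagBelow {n : ℕ} (N : Set (Fin n →₀ ℕ)) (α : Fin n →₀ ℕ) : Set (Fin n →₀ ℕ) :=
  {x | ∃ b ∈ N, degLexLt b α ∧ ∃ c : Fin n →₀ ℕ, x = b + c}

/-- `v` is a vertex of the diagram `D`: an element of `D` not of the form `b + c` for any
other element `b` of `D` (i.e. a minimal generator). -/
def IsVertex {n : ℕ} (D : Set (Fin n →₀ ℕ)) (v : Fin n →₀ ℕ) : Prop :=
  v ∈ D ∧ ∀ b ∈ D, (∃ c : Fin n →₀ ℕ, v = b + c) → b = v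

/-- The increasing vertex list of a diagram, padded by `+∞` to an infinite sequence of
keys. -/
def padVert {n s : ℕ} (w : Fin s → (Fin n →₀ ℕ)) : ℕ → WithTop (ℕ ×ₗ Lex (Fin n →₀ ℕ)) :=
  fun j => if h : j < s then (WithTop.some (dlKey (w ⟨j, h⟩))) else ⊤

/-- The lexicographic comparison of diagrams via their increasing sequences of vertices,
with missing entries of the shorter list counted as `+∞`. -/
def DiagLexLt {n s₁ s₂ : ℕ} (w₁ : Fin s₁ → (Fin n →₀ ℕ)) (w₂ : Fin s₂ → (Fin n →₀ ℕ)) :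
    Prop :=
  ∃ j : ℕ, (∀ i < j, padVert w₁ i = padVert w₂ i) ∧ padVert w₁ j < padVert w₂ j

/-! Every element of a diagram lies above one of its vertices, so once `α` dominates all
vertices of `N` the truncation `N(α)` is `N` itself. Both sides of the equivalence then
compare the same two increasing vertex lists. -/

section Diagrams

variable {n : ℕ}

theorem isVertex_iff_minimal {D : Set (Fin n →₀ ℕ)} {v : Fin n →₀ ℕ} :
    IsVertex D v ↔ Minimal (· ∈ D) v := by
  simp only [IsVertex, Minimal, ← le_iff_exists_add]
  refine and_congr_right fun _ => forall₂_congr fun b _ => ?_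
  exact ⟨fun h hbv => (h hbv).ge, fun h hbv => le_antisymm hbv (h hbv)⟩

theorem exists_isVertex_le {D : Set (Fin n →₀ ℕ)} {x : Fin n →₀ ℕ} (hx : x ∈ D) :
    ∃ b, IsVertex D b ∧ b ≤ x := by
  obtain ⟨b, hbx, hb⟩ := exists_minimal_le_of_wellFoundedLT (· ∈ D) x hx
  exact ⟨b, isVertex_iff_minimal.2 hb, hbx⟩

theorem diagAt_eq_self {N : Set (Fin n →₀ ℕ)}
    (hN : {x | ∃ a ∈ N, ∃ c : Fin n →₀ ℕ, x = a + c} = N) {α : Fin n →₀ ℕ}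
    (hα : ∀ v, IsVertex N v → degLexLe v α) :
    diagAt N α = N := by
  ext x
  constructor
  · rintro ⟨b, hb, -, hbx⟩
    exact hN ▸ ⟨b, hb, hbx⟩
  · intro hx
    obtain ⟨b, hb, hbx⟩ := exists_isVertex_le hx
    exact ⟨b, hb.1, hα b hb, le_iff_exists_add.1 hbx⟩

theorem padVert_eq_of_range_eq {s t : ℕ} {f : Fin s → (Fin n →₀ ℕ)} {g : Fin t → (Fin n →₀ ℕ)}
    (hf : ∀ i j, i < j → degLexLt (f i) (f j)) (hg : ∀ i j, i < j → degLexLt (g i) (g j))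
    (hfg : Set.range f = Set.range g) :
    padVert f = padVert g := by
  have hf' : StrictMono (dlKey ∘ f) := hf
  have hg' : StrictMono (dlKey ∘ g) := hg
  obtain rfl : s = t := by
    have hcard := congrArg (fun S : Set _ => Nat.card S) hfg
    simpa only [Nat.card_range_of_injective hf'.injective.of_comp,
      Nat.card_range_of_injective hg'.injective.of_comp, Nat.card_eq_fintype_card,
      Fintype.card_fin] using hcard
  have hkeys : dlKey ∘ f = dlKey ∘ g :=
    (hf'.range_inj hg').1 (by rw [Set.range_comp, Set.range_comp, hfg])
  funext j
  unfold padVert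
  split_ifs with hj
  · exact congrArg _ (congrFun hkeys ⟨j, hj⟩)
  · rfl

end Diagrams

/-- Let `N₁, N₂` be diagrams in `ℕ^n` (with increasing vertex
enumerations `v₁`, `v₂`) and let `α` be greater than or equal to every vertex of both
`N₁` and `N₂` (in the graded order).  Then `N₁ ≥ N₂` if and only if `N₁(α) ≥ N₂(α)`,
where `N(α) = ℕ^n + {β ∈ N : β ≤ α}` (with increasing vertex enumerations `w₁`, `w₂`),
diagrams being compared by the lexicographic order on their vertex lists. -/
theorem statement15 {n : ℕ} (N₁ N₂ : Set (Fin n →₀ ℕ))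
    (hN₁ : {x | ∃ a ∈ N₁, ∃ c : Fin n →₀ ℕ, x = a + c} = N₁)
    (hN₂ : {x | ∃ a ∈ N₂, ∃ c : Fin n →₀ ℕ, x = a + c} = N₂)
    (α : Fin n →₀ ℕ) {t₁ t₂ s₁ s₂ : ℕ}
    (v₁ : Fin t₁ → (Fin n →₀ ℕ)) (v₂ : Fin t₂ → (Fin n →₀ ℕ))
    (w₁ : Fin s₁ → (Fin n →₀ ℕ)) (w₂ : Fin s₂ → (Fin n →₀ ℕ))
    (hv₁mono : ∀ i j : Fin t₁, i < j → degLexLt (v₁ i) (v₁ j))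
    (hv₂mono : ∀ i j : Fin t₂, i < j → degLexLt (v₂ i) (v₂ j))
    (hw₁mono : ∀ i j : Fin s₁, i < j → degLexLt (w₁ i) (w₁ j))
    (hw₂mono : ∀ i j : Fin s₂, i < j → degLexLt (w₂ i) (w₂ j))
    (hv₁ : ∀ v, IsVertex N₁ v ↔ ∃ i, v₁ i = v)
    (hv₂ : ∀ v, IsVertex N₂ v ↔ ∃ i, v₂ i = v)
    (hw₁ : ∀ v, IsVertex (diagAt N₁ α) v ↔ ∃ i, w₁ i = v)
    (hw₂ : ∀ v, IsVertex (diagAt N₂ α) v ↔ ∃ i, w₂ i = v)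
    (hα₁ : ∀ i, degLexLe (v₁ i) α) (hα₂ : ∀ i, degLexLe (v₂ i) α) :
    ¬ DiagLexLt v₁ v₂ ↔ ¬ DiagLexLt w₁ w₂ := by
  have h₁ : diagAt N₁ α = N₁ :=
    diagAt_eq_self hN₁ fun v hv => by obtain ⟨i, rfl⟩ := (hv₁ v).1 hv; exact hα₁ i
  have h₂ : diagAt N₂ α = N₂ :=
    diagAt_eq_self hN₂ fun v hv => by obtain ⟨i, rfl⟩ := (hv₂ v).1 hv; exact hα₂ i
  have hr₁ : Set.range w₁ = Set.range v₁ :=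
    Set.ext fun v => (hw₁ v).symm.trans (by rw [h₁]; exact hv₁ v)
  have hr₂ : Set.range w₂ = Set.range v₂ :=
    Set.ext fun v => (hw₂ v).symm.trans (by rw [h₂]; exact hv₂ v)
  unfold DiagLexLt
  rw [padVert_eq_of_range_eq hw₁mono hv₁mono hr₁, padVert_eq_of_range_eq hw₂mono hv₂mono hr₂]
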